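/- The fundamental domains F and F_∞ are locally finite: for every compact subset C of H²×H², the set {γ ∈ Γ : C ∩ γ(F) ≠ ∅} is finite, and the set {γ ∈ Γ_∞ : C ∩ γ(F_∞) ≠ ∅} is finite. -/

import Mathlib

/-!
A compact `C ⊆ H²×H²` lies in a box `|xᵢ| ≤ X`, `m ≤ yᵢ ≤ M`. If `γZ ∈ C` with `Z ∈ F`, the
height `h = y₁y₂` satisfies `h(γZ) = h(Z)/‖cZ+d‖`; here `‖cZ+d‖ ≥ 1` because `Z ∈ F₀`, and
`‖cZ+d‖ ≤ h(γZ)⁻²` because `|N(c)| ≥ 1` when `c ≠ 0` (while `‖cZ+d‖ = 1` when `c = 0`, as `d`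
is then a unit). So `h(Z)` is pinched, and with `ε₀⁻² ≤ r ≤ ε₀²`, `|sᵢ| ≤ 1/2` the point `Z`
lies in a box as well. A real Möbius transformation of determinant one moving a point of one box
into another has bounded entries, by `Im γz = Im z/|cz+d|²`, `|a - cγz| = |cz+d|⁻¹` and
`|az+b| = |γz| |cz+d|`; since `R` is a lattice in `ℝ²` under its two embeddings, only finitely
many `γ` remain. On `Γ_∞` the height is invariant, so `F_∞` needs no condition from `F₀`.
-/

noncomputable section

open scoped Classical
open MeasureTheory

namespace Hilbert

/-- `k₀ = 2` if `k ≡ 1 (mod 4)` and `k₀ = 1` otherwise. -/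
def k0 (k : ℕ) : ℝ := if k % 4 = 1 then 2 else 1

/-- `ω = (1 + √k)/k₀`. -/
def omg (k : ℕ) : ℝ := (1 + Real.sqrt k) / k0 k

/-- `ω' = (1 - √k)/k₀`, the algebraic conjugate of `ω`. -/
def omg' (k : ℕ) : ℝ := (1 - Real.sqrt k) / k0 k

/-- The ring `R = ℤ[ω]`, realized inside `ℝ × ℝ` via the pair of real embeddings
`α ↦ (α, α')` of `K = ℚ(√k)`. -/
def R (k : ℕ) : Subring (ℝ × ℝ) := Subring.closure {(omg k, omg' k)}

/-- The ambient space `ℝ⁴`, with coordinates `(x₁, x₂, y₁, y₂)`. -/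
abbrev Pt : Type := ℝ × ℝ × ℝ × ℝ

def x1 (p : Pt) : ℝ := p.1
def x2 (p : Pt) : ℝ := p.2.1
def y1 (p : Pt) : ℝ := p.2.2.1
def y2 (p : Pt) : ℝ := p.2.2.2

/-- `H² × H²`, identified with an open subset of `ℝ⁴`. -/
def HH : Set Pt := {p | 0 < y1 p ∧ 0 < y2 p}

/-- The coordinate `s₁`, determined by `x₁ = s₁ + s₂ ω`, `x₂ = s₁ + s₂ ω'`. -/
def s1 (k : ℕ) (p : Pt) : ℝ := (omg' k * x1 p - omg k * x2 p) / (omg' k - omg k)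

/-- The coordinate `s₂`. -/
def s2 (k : ℕ) (p : Pt) : ℝ := (x1 p - x2 p) / (omg k - omg' k)

/-- The ratio `r = y₁/y₂`. -/
def rr (p : Pt) : ℝ := y1 p / y2 p

/-- The height `h = y₁ y₂`. -/
def hh (p : Pt) : ℝ := y1 p * y2 p

/-- `‖cZ+d‖ = ((cx₁+d)² + c²y₁²)((c'x₂+d')² + c'²y₂²)`, where `c = (c, c')`, `d = (d, d')`
are given by their two real embeddings. -/
def HNorm (c d : ℝ × ℝ) (p : Pt) : ℝ :=
  ((c.1 * x1 p + d.1) ^ 2 + c.1 ^ 2 * y1 p ^ 2) *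
    ((c.2 * x2 p + d.2) ^ 2 + c.2 ^ 2 * y2 p ^ 2)

/-- `S = {(c,d) ∈ R² : cR + dR = R}`. -/
def Spairs (k : ℕ) : Set (R k × R k) := {cd | Ideal.span {cd.1, cd.2} = ⊤}

/-- `V_{c,d}^≥ = {Z ∈ H²×H² : ‖cZ+d‖ ≥ 1}`. -/
def Vge (k : ℕ) (cd : R k × R k) : Set Pt :=
  {p ∈ HH | 1 ≤ HNorm (cd.1 : ℝ × ℝ) (cd.2 : ℝ × ℝ) p}

/-- `V_{c,d}^≤ = {Z ∈ H²×H² : ‖cZ+d‖ ≤ 1}`. -/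
def Vle (k : ℕ) (cd : R k × R k) : Set Pt :=
  {p ∈ HH | HNorm (cd.1 : ℝ × ℝ) (cd.2 : ℝ × ℝ) p ≤ 1}

/-- `V_{c,d} = {Z ∈ H²×H² : ‖cZ+d‖ = 1}`. -/
def Veq (k : ℕ) (cd : R k × R k) : Set Pt :=
  {p ∈ HH | HNorm (cd.1 : ℝ × ℝ) (cd.2 : ℝ × ℝ) p = 1}

/-- `F₀ = {Z ∈ H²×H² : ‖cZ+d‖ ≥ 1 for all (c,d) ∈ S}`. -/
def F0 (k : ℕ) : Set Pt :=
  {p ∈ HH | ∀ cd ∈ Spairs k, 1 ≤ HNorm (cd.1 : ℝ × ℝ) (cd.2 : ℝ × ℝ) p}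

/-- `F_∞ = {(s₁,s₂,r,h) : |s₁| ≤ 1/2, |s₂| ≤ 1/2, ε₀⁻² ≤ r ≤ ε₀²}`, where `ε` stands
for the fundamental unit `ε₀`. -/
def FInf (k : ℕ) (ε : ℝ) : Set Pt :=
  {p ∈ HH | |s1 k p| ≤ 1 / 2 ∧ |s2 k p| ≤ 1 / 2 ∧ (ε ^ 2)⁻¹ ≤ rr p ∧ rr p ≤ ε ^ 2}

/-- `F = F_∞ ∩ F₀`. -/
def F (k : ℕ) (ε : ℝ) : Set Pt := FInf k ε ∩ F0 k

/-- `SL₂(R)`. -/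
abbrev SL (k : ℕ) := Matrix.SpecialLinearGroup (Fin 2) (R k)

/-- Möbius action on the upper half-plane: image of `x + y i` under `(a b; c d)`. -/
def moeb (a b c d x y : ℝ) : ℝ × ℝ :=
  (((a * x + b) * (c * x + d) + a * c * y ^ 2) / ((c * x + d) ^ 2 + c ^ 2 * y ^ 2),
    y / ((c * x + d) ^ 2 + c ^ 2 * y ^ 2))

/-- The action of `γ ∈ SL₂(R)` on `H²×H²`: `γ` acts on the first factor through the first
embedding and through the conjugate matrix `γ'` (second embedding) on the second factor.
This descends to the Hilbert modular group `PSL₂(R)`. -/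
def act (k : ℕ) (g : SL k) (p : Pt) : Pt :=
  ((moeb (g.1 0 0 : ℝ × ℝ).1 (g.1 0 1 : ℝ × ℝ).1 (g.1 1 0 : ℝ × ℝ).1 (g.1 1 1 : ℝ × ℝ).1
      (x1 p) (y1 p)).1,
   (moeb (g.1 0 0 : ℝ × ℝ).2 (g.1 0 1 : ℝ × ℝ).2 (g.1 1 0 : ℝ × ℝ).2 (g.1 1 1 : ℝ × ℝ).2
      (x2 p) (y2 p)).1,
   (moeb (g.1 0 0 : ℝ × ℝ).1 (g.1 0 1 : ℝ × ℝ).1 (g.1 1 0 : ℝ × ℝ).1 (g.1 1 1 : ℝ × ℝ).1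
      (x1 p) (y1 p)).2,
   (moeb (g.1 0 0 : ℝ × ℝ).2 (g.1 0 1 : ℝ × ℝ).2 (g.1 1 0 : ℝ × ℝ).2 (g.1 1 1 : ℝ × ℝ).2
      (x2 p) (y2 p)).2)

/-- The pair of real embeddings of a unit of `R`. -/
def unitVal (k : ℕ) (u : (R k)ˣ) : ℝ × ℝ := ((u : R k) : ℝ × ℝ)

/-- `e` is the fundamental unit of `R`: the smallest unit of `R` greater than `1`
(with respect to the first embedding). -/
def IsFundUnit (k : ℕ) (e : (R k)ˣ) : Prop :=
  1 < (unitVal k e).1 ∧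
    ∀ v : (R k)ˣ, 1 < (unitVal k v).1 → (unitVal k e).1 ≤ (unitVal k v).1

/-- The real number `ε₀ > 1`, the fundamental unit under the first embedding. -/
def eps (k : ℕ) (e : (R k)ˣ) : ℝ := (unitVal k e).1


/-- The norm `N(c) = c c'` of an element of `R` (as a real number). -/
def Nm (k : ℕ) (c : R k) : ℝ := ((c : ℝ × ℝ)).1 * ((c : ℝ × ℝ)).2

/-- A subset `C` of `H²×H²` is hyperbolically bounded if it is bounded in the
Euclidean metric and `y₁, y₂ > ε` on `C` for some `ε > 0`. -/
def HypBounded (C : Set Pt) : Prop :=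
  C ⊆ HH ∧ Bornology.IsBounded C ∧ ∃ ε > (0 : ℝ), ∀ p ∈ C, ε < y1 p ∧ ε < y2 p

/-- `V_{C,μ} = {(c,d) ∈ R × R : ‖cZ+d‖ ≤ μ for some Z ∈ C}`. -/
def VCmu (k : ℕ) (C : Set Pt) (μ : ℝ) : Set (R k × R k) :=
  {cd | ∃ p ∈ C, HNorm (cd.1 : ℝ × ℝ) (cd.2 : ℝ × ℝ) p ≤ μ}

/-- The conditions (8) of Theorem `FiniteSides` on a pair `(c,d) ∈ R²`. -/
def SCond (k : ℕ) (ε : ℝ) (cd : R k × R k) : Prop :=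
  cd.1 ≠ 0 ∧ Ideal.span {cd.1, cd.2} = ⊤ ∧
    |Nm k cd.1| ≤ 2 * k / (k0 k) ^ 2 ∧
    |((cd.2 : ℝ × ℝ)).1 / ((cd.1 : ℝ × ℝ)).1| <
      ε * Real.sqrt (2 * k / (Nm k cd.1 ^ 2 * (k0 k) ^ 2) - (k0 k) ^ 2 / (2 * k)) +
        (1 + omg k) / 2 ∧
    |((cd.2 : ℝ × ℝ)).2 / ((cd.1 : ℝ × ℝ)).2| <
      ε * Real.sqrt (2 * k / (Nm k cd.1 ^ 2 * (k0 k) ^ 2) - (k0 k) ^ 2 / (2 * k)) +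
        (1 - omg' k) / 2

/-- `S₁` is a set of representatives, up to multiplication by units of `R`, of the pairs
`(c,d) ∈ R²` satisfying the conditions `SCond`. -/
def IsRepSet (k : ℕ) (ε : ℝ) (S1 : Set (R k × R k)) : Prop :=
  (∀ cd ∈ S1, SCond k ε cd) ∧
    (∀ cd : R k × R k, SCond k ε cd →
      ∃ ab ∈ S1, ∃ u : (R k)ˣ, cd.1 = (u : R k) * ab.1 ∧ cd.2 = (u : R k) * ab.2) ∧
    (∀ ab ∈ S1, ∀ ab' ∈ S1,
      (∃ u : (R k)ˣ, ab'.1 = (u : R k) * ab.1 ∧ ab'.2 = (u : R k) * ab.2) → ab = ab')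

/-- The family `𝒱_∞ = {V_i^± : i = 1,2,3}`. -/
def VfamInf (k : ℕ) (ε : ℝ) : Set (Set Pt) :=
  { {p ∈ HH | s1 k p = 1 / 2}, {p ∈ HH | s1 k p = -(1 / 2)},
    {p ∈ HH | s2 k p = 1 / 2}, {p ∈ HH | s2 k p = -(1 / 2)},
    {p ∈ HH | rr p = ε ^ 2}, {p ∈ HH | rr p = (ε ^ 2)⁻¹} }

/-- The family `𝒱 = {V_{c,d} : (c,d) ∈ S, c ≠ 0}`. -/
def Vfam (k : ℕ) : Set (Set Pt) :=
  {V | ∃ cd ∈ Spairs k, cd.1 ≠ 0 ∧ V = Veq k cd}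

/-- The family `𝓜 = {γ(M) : γ ∈ Γ, M ∈ 𝒱 ∪ 𝒱_∞}`. -/
def Mfam (k : ℕ) (ε : ℝ) : Set (Set Pt) :=
  {M | ∃ g : SL k, ∃ V ∈ Vfam k ∪ VfamInf k ε, M = act k g '' V}

/-- `ω` as an element of `R`. -/
def omR (k : ℕ) : R k := ⟨(omg k, omg' k), Subring.subset_closure rfl⟩

/-- The side-pairing transformations: `γ ≠ 1` (in `PSL₂(R)`) such that `F ∩ γ⁻¹(F)` has
Hausdorff dimension `3`. -/
def SidePairings (k : ℕ) (ε : ℝ) : Set (SL k) :=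
  {g | g ≠ 1 ∧ g.1 ≠ -1 ∧ dimH (F k ε ∩ act k g⁻¹ '' F k ε) = 3}


section Arithmetic

variable {k : ℕ}

lemma k0_pos (k : ℕ) : 0 < k0 k := by unfold k0; split <;> norm_num

lemma omg_sub_omg'_pos (hk : 0 < k) : 0 < omg k - omg' k := by
  have : omg k - omg' k = 2 * Real.sqrt k / k0 k := by unfold omg omg'; ring
  rw [this]
  have := k0_pos k
  positivity

lemma exists_int_omg_add_omg'_mul (k : ℕ) :
    ∃ t n : ℤ, omg k + omg' k = t ∧ omg k * omg' k = n := by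
  have hsq : Real.sqrt k ^ 2 = k := Real.sq_sqrt (Nat.cast_nonneg k)
  unfold omg omg' k0
  split_ifs with h
  · obtain ⟨q, hq⟩ : ∃ q : ℤ, (k : ℤ) = 4 * q + 1 := ⟨k / 4, by omega⟩
    have hk : (k : ℝ) = 4 * q + 1 := by exact_mod_cast hq
    exact ⟨1, -q, by ring, by push_cast; linear_combination -hsq / 4 - hk / 4⟩
  · exact ⟨2, 1 - k, by ring, by push_cast; linear_combination -hsq⟩

lemma exists_int_add_mul_omg (x : R k) :
    ∃ m n : ℤ, (x : ℝ × ℝ).1 = m + n * omg k ∧ (x : ℝ × ℝ).2 = m + n * omg' k := by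
  obtain ⟨t, n₀, ht, hn₀⟩ := exists_int_omg_add_omg'_mul k
  obtain ⟨v, hv⟩ := x
  show ∃ m n : ℤ, v.1 = m + n * omg k ∧ v.2 = m + n * omg' k
  induction hv using Subring.closure_induction with
  | mem x hx =>
    rcases hx with rfl
    exact ⟨0, 1, by simp, by simp⟩
  | zero => exact ⟨0, 0, by simp, by simp⟩
  | one => exact ⟨1, 0, by simp, by simp⟩
  | add x y _ _ ihx ihy =>
    obtain ⟨m, n, h1, h2⟩ := ihx
    obtain ⟨p, q, g1, g2⟩ := ihy
    exact ⟨m + p, n + q, by simp only [Prod.fst_add, h1, g1]; push_cast; ring,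
      by simp only [Prod.snd_add, h2, g2]; push_cast; ring⟩
  | neg x _ ihx =>
    obtain ⟨m, n, h1, h2⟩ := ihx
    exact ⟨-m, -n, by simp only [Prod.fst_neg, h1]; push_cast; ring,
      by simp only [Prod.snd_neg, h2]; push_cast; ring⟩
  | mul x y _ _ ihx ihy =>
    -- `ω² = tω - n₀`, and likewise for `ω'`
    obtain ⟨m, n, h1, h2⟩ := ihx
    obtain ⟨p, q, g1, g2⟩ := ihy
    refine ⟨m * p - n * q * n₀, m * q + n * p + n * q * t, ?_, ?_⟩
    · simp only [Prod.fst_mul, h1, g1]; push_cast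
      linear_combination (n * q * omg k : ℝ) * ht - (n * q : ℝ) * hn₀
    · simp only [Prod.snd_mul, h2, g2]; push_cast
      linear_combination (n * q * omg' k : ℝ) * ht - (n * q : ℝ) * hn₀

lemma finite_setOf_sq_le (hk : 0 < k) (B : ℝ) :
    {x : R k | (x : ℝ × ℝ).1 ^ 2 ≤ B ∧ (x : ℝ × ℝ).2 ^ 2 ≤ B}.Finite := by
  have hω := omg_sub_omg'_pos hk
  set b := 2 * Real.sqrt B / (omg k - omg' k)
  obtain ⟨K, hK⟩ := exists_nat_ge (b + (Real.sqrt B + b * |omg k|))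
  let Φ : ℤ × ℤ → ℝ × ℝ := fun mn => (mn.1 + mn.2 * omg k, mn.1 + mn.2 * omg' k)
  have hfin := (((Set.finite_Icc (-(K : ℤ)) K).prod (Set.finite_Icc (-(K : ℤ)) K)).image Φ)
  refine (hfin.preimage Subtype.val_injective.injOn).subset ?_
  rintro x ⟨hx1, hx2⟩
  obtain ⟨m, n, h1, h2⟩ := exists_int_add_mul_omg x
  have habs1 := Real.abs_le_sqrt hx1
  have habs2 := Real.abs_le_sqrt hx2
  have hn : |(n : ℝ)| ≤ b := by
    rw [le_div_iff₀ hω, ← abs_of_pos hω, ← abs_mul,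
      show (n : ℝ) * (omg k - omg' k) = (x : ℝ × ℝ).1 - (x : ℝ × ℝ).2 by rw [h1, h2]; ring]
    linarith [abs_sub (x : ℝ × ℝ).1 (x : ℝ × ℝ).2]
  have hm : |(m : ℝ)| ≤ Real.sqrt B + b * |omg k| := by
    rw [show (m : ℝ) = (x : ℝ × ℝ).1 - n * omg k by rw [h1]; ring]
    calc _ ≤ |(x : ℝ × ℝ).1| + |(n : ℝ)| * |omg k| := by rw [← abs_mul]; exact abs_sub _ _
      _ ≤ _ := by gcongr
  have hb : 0 ≤ b := le_trans (abs_nonneg _) hn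
  have hmem : ∀ j : ℤ, |(j : ℝ)| ≤ K → j ∈ Set.Icc (-(K : ℤ)) K := fun j hj => by
    rw [abs_le] at hj
    exact ⟨by exact_mod_cast hj.1, by exact_mod_cast hj.2⟩
  refine ⟨(m, n), ⟨hmem m ?_, hmem n ?_⟩, Prod.ext h1.symm h2.symm⟩
  · linarith
  · linarith [mul_nonneg hb (abs_nonneg (omg k)), Real.sqrt_nonneg B]

lemma finite_setOf_entries_sq_le (hk : 0 < k) (B : ℝ) :
    {g : SL k | ∀ i j, ((g.1 i j : ℝ × ℝ)).1 ^ 2 ≤ B ∧ ((g.1 i j : ℝ × ℝ)).2 ^ 2 ≤ B}.Finite :=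
  ((Set.Finite.pi fun _ => Set.Finite.pi fun _ => finite_setOf_sq_le hk B).preimage
    Subtype.val_injective.injOn).subset fun _ hg i _ j _ => hg i j

lemma exists_int_Nm_eq (x : R k) : ∃ N : ℤ, Nm k x = N := by
  obtain ⟨t, n₀, ht, hn₀⟩ := exists_int_omg_add_omg'_mul k
  obtain ⟨m, n, h1, h2⟩ := exists_int_add_mul_omg x
  refine ⟨m ^ 2 + m * n * t + n ^ 2 * n₀, ?_⟩
  rw [Nm, h1, h2]
  push_cast
  linear_combination (m * n : ℝ) * ht + (n ^ 2 : ℝ) * hn₀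

lemma Nm_mul (x y : R k) : Nm k (x * y) = Nm k x * Nm k y := by
  simp only [Nm, Subring.coe_mul, Prod.fst_mul, Prod.snd_mul]; ring

lemma sq_Nm_eq_one_of_isUnit {x : R k} (hx : IsUnit x) : Nm k x ^ 2 = 1 := by
  obtain ⟨y, hxy⟩ := hx.exists_right_inv
  obtain ⟨M, hM⟩ := exists_int_Nm_eq x
  obtain ⟨N, hN⟩ := exists_int_Nm_eq y
  have hMN : M * N = 1 := by
    have := Nm_mul x y
    rw [hxy, hM, hN] at this
    exact_mod_cast (show (1 : ℝ) = M * N by simpa [Nm] using this).symm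
  rcases Int.eq_one_or_neg_one_of_mul_eq_one hMN with h | h <;> simp [hM, h]

lemma irrational_omg (hk : Squarefree k) (hk1 : 1 < k) :
    Irrational (omg k) ∧ Irrational (omg' k) := by
  have hsqrt : Irrational (Real.sqrt k) := by
    rw [irrational_sqrt_natCast_iff]
    rintro ⟨r, rfl⟩
    have := Nat.isUnit_iff.mp (hk r ⟨1, by ring⟩)
    subst this
    omega
  unfold omg omg' k0
  split_ifs
  · exact ⟨by exact_mod_cast (hsqrt.intCast_add 1).div_natCast two_ne_zero,
      by exact_mod_cast (hsqrt.intCast_sub 1).div_natCast two_ne_zero⟩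
  · exact ⟨by simpa using hsqrt.intCast_add 1, by simpa using hsqrt.intCast_sub 1⟩

lemma eq_zero_of_intCast_add_mul_eq_zero {w : ℝ} (hw : Irrational w) {m n : ℤ}
    (h : (m : ℝ) + n * w = 0) : m = 0 ∧ n = 0 := by
  obtain rfl : n = 0 := by
    by_contra hn
    exact ((hw.intCast_mul hn).intCast_add m).ne_zero h
  exact ⟨by simpa using h, rfl⟩

lemma one_le_abs_Nm (hk : Squarefree k) (hk1 : 1 < k) {x : R k} (hx : x ≠ 0) :
    1 ≤ |Nm k x| := by
  obtain ⟨N, hN⟩ := exists_int_Nm_eq x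
  obtain ⟨m, n, h1, h2⟩ := exists_int_add_mul_omg x
  obtain ⟨hω, hω'⟩ := irrational_omg hk hk1
  have hN0 : N ≠ 0 := by
    rintro rfl
    have hmn : m = 0 ∧ n = 0 := by
      rcases mul_eq_zero.mp (hN.trans Int.cast_zero) with h | h
      · exact eq_zero_of_intCast_add_mul_eq_zero hω (h1 ▸ h)
      · exact eq_zero_of_intCast_add_mul_eq_zero hω' (h2 ▸ h)
    exact hx (Subtype.ext (Prod.ext (by simp [h1, hmn]) (by simp [h2, hmn])))
  rw [hN]
  exact_mod_cast Int.one_le_abs hN0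

end Arithmetic

lemma sq_add_le_of_sq_le {p q P Q : ℝ} (hp : p ^ 2 ≤ P) (hq : q ^ 2 ≤ Q) :
    (p + q) ^ 2 ≤ 2 * (P + Q) := by
  linarith [add_sq_le (a := p) (b := q)]

lemma sq_mul_le_of_sq_le {p q P Q : ℝ} (hp : p ^ 2 ≤ P) (hq : q ^ 2 ≤ Q) :
    (p * q) ^ 2 ≤ P * Q := by
  rw [mul_pow]; exact mul_le_mul hp hq (sq_nonneg q) ((sq_nonneg p).trans hp)

section Moebius

variable {a b c d x y : ℝ}

lemma moeb_denom_pos (hdet : a * d - b * c = 1) (hy : 0 < y) :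
    0 < (c * x + d) ^ 2 + c ^ 2 * y ^ 2 := by
  rcases eq_or_ne c 0 with rfl | hc
  · have hd : d ≠ 0 := by rintro rfl; simp at hdet
    simpa using (by positivity : 0 < d ^ 2)
  · positivity

lemma moeb_snd_mul_denom (hdet : a * d - b * c = 1) (hy : 0 < y) :
    (moeb a b c d x y).2 * ((c * x + d) ^ 2 + c ^ 2 * y ^ 2) = y :=
  div_mul_cancel₀ y (moeb_denom_pos hdet hy).ne'

/-- `|a - c w|² |c z + d|² = 1` for `w = γ z`: the denominators of `γ` at `z` and of
`γ⁻¹ = (d, -b; -c, a)` at `w` are reciprocal. -/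
lemma moeb_inv_denom_mul_denom (hdet : a * d - b * c = 1) (hy : 0 < y) :
    ((a - c * (moeb a b c d x y).1) ^ 2 + c ^ 2 * (moeb a b c d x y).2 ^ 2) *
      ((c * x + d) ^ 2 + c ^ 2 * y ^ 2) = 1 := by
  have hN := (moeb_denom_pos hdet hy (x := x)).ne'
  simp only [moeb]
  field_simp
  linear_combination (c * x + d) ^ 2 * (a * d - b * c + 1) * hdet

/-- `|a z + b|² = |w|² |c z + d|²` for `w = γ z`. -/
lemma moeb_numer_sq (hdet : a * d - b * c = 1) (hy : 0 < y) :
    (a * x + b) ^ 2 + a ^ 2 * y ^ 2 =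
      ((moeb a b c d x y).1 ^ 2 + (moeb a b c d x y).2 ^ 2) *
        ((c * x + d) ^ 2 + c ^ 2 * y ^ 2) := by
  have hN := (moeb_denom_pos hdet hy (x := x)).ne'
  simp only [moeb]
  generalize hN' : (c * x + d) ^ 2 + c ^ 2 * y ^ 2 = N at hN ⊢
  field_simp
  rw [← hN']
  linear_combination y ^ 2 * (a * d - b * c + 1) * hdet

lemma moeb_denom_mul_sq_mul_sq_le_one (hdet : a * d - b * c = 1) (hy : 0 < y) :
    ((c * x + d) ^ 2 + c ^ 2 * y ^ 2) * (c ^ 2 * (moeb a b c d x y).2 ^ 2) ≤ 1 := by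
  have := moeb_inv_denom_mul_denom hdet hy (x := x)
  nlinarith [(moeb_denom_pos hdet hy (x := x)).le, sq_nonneg (a - c * (moeb a b c d x y).1)]

def halfBox (X m M : ℝ) : Set (ℝ × ℝ) := {z | |z.1| ≤ X ∧ m ≤ z.2 ∧ z.2 ≤ M}

lemma sq_le_sq_of_mem_halfBox {X m M : ℝ} {z : ℝ × ℝ} (hz : z ∈ halfBox X m M) :
    z.1 ^ 2 ≤ X ^ 2 :=
  sq_le_sq' (abs_le.mp hz.1).1 (abs_le.mp hz.1).2

/-- Both `|cz + d|²` and `|a - cw|² = |cz + d|⁻²` are controlled by the heights of `z` and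
`w = γz`, since `Im w = Im z / |cz + d|²`. -/
lemma moeb_denom_le_of_mem_halfBox {X m M X' m' M' : ℝ} (hm : 0 < m) (hm' : 0 < m')
    (hdet : a * d - b * c = 1) {z : ℝ × ℝ} (hz : z ∈ halfBox X m M)
    (hw : moeb a b c d z.1 z.2 ∈ halfBox X' m' M') :
    (c * z.1 + d) ^ 2 + c ^ 2 * z.2 ^ 2 ≤ M / m' ∧
      (a - c * (moeb a b c d z.1 z.2).1) ^ 2 ≤ M' / m := by
  obtain ⟨x, y⟩ := z
  obtain ⟨-, hym, hyM⟩ := hz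
  obtain ⟨-, hvm, hvM⟩ := hw
  dsimp only at hym hyM hvm hvM ⊢
  set u := (moeb a b c d x y).1
  set v := (moeb a b c d x y).2
  have hy : 0 < y := hm.trans_le hym
  have hN := moeb_denom_pos hdet hy (x := x)
  set N := (c * x + d) ^ 2 + c ^ 2 * y ^ 2
  have hvN : v * N = y := moeb_snd_mul_denom hdet hy
  have hinv : ((a - c * u) ^ 2 + c ^ 2 * v ^ 2) * N = 1 := moeb_inv_denom_mul_denom hdet hy
  constructor
  · rw [le_div_iff₀ hm']
    calc N * m' ≤ N * v := by gcongr
      _ ≤ M := by linarith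
  · have h1 : (a - c * u) ^ 2 * N ≤ 1 := by
      linarith [mul_nonneg (mul_nonneg (sq_nonneg c) (sq_nonneg v)) hN.le]
    rw [le_div_iff₀ hm]
    calc (a - c * u) ^ 2 * m ≤ (a - c * u) ^ 2 * y := by gcongr
      _ = v * ((a - c * u) ^ 2 * N) := by rw [← hvN]; ring
      _ ≤ v * 1 := by gcongr; exact (hm'.trans_le hvm).le
      _ ≤ M' := by linarith

lemma exists_sq_le_of_moeb_mem_halfBox {X m M X' m' M' : ℝ} (hm : 0 < m) (hm' : 0 < m') :
    ∃ B, ∀ a b c d : ℝ, a * d - b * c = 1 → ∀ z ∈ halfBox X m M,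
      moeb a b c d z.1 z.2 ∈ halfBox X' m' M' →
        a ^ 2 ≤ B ∧ b ^ 2 ≤ B ∧ c ^ 2 ≤ B ∧ d ^ 2 ≤ B := by
  set cB := M / m' / m ^ 2
  set aB := 2 * (M' / m + cB * X' ^ 2)
  refine ⟨max (max cB (2 * (M / m' + cB * X ^ 2)))
    (max aB (2 * ((X' ^ 2 + M' ^ 2) * (M / m') + aB * X ^ 2))), ?_⟩
  intro a b c d hdet z hz hw
  obtain ⟨hN, hacu⟩ := moeb_denom_le_of_mem_halfBox hm hm' hdet hz hw
  have hy : 0 < z.2 := hm.trans_le hz.2.1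
  have hx := sq_le_sq_of_mem_halfBox hz
  have hu := sq_le_sq_of_mem_halfBox hw
  have hv : (moeb a b c d z.1 z.2).2 ^ 2 ≤ M' ^ 2 :=
    pow_le_pow_left₀ (hm'.le.trans hw.2.1) hw.2.2 2
  have hcy := mul_nonneg (sq_nonneg c) (sq_nonneg z.2)
  have hc : c ^ 2 ≤ cB := by
    rw [le_div_iff₀ (by positivity)]
    calc c ^ 2 * m ^ 2 ≤ c ^ 2 * z.2 ^ 2 := by gcongr; exact hz.2.1
      _ ≤ M / m' := by linarith [sq_nonneg (c * z.1 + d)]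
  have hd : d ^ 2 ≤ 2 * (M / m' + cB * X ^ 2) := by
    have hcxd : (c * z.1 + d) ^ 2 ≤ M / m' := by linarith
    simpa using sq_add_le_of_sq_le hcxd ((neg_sq (c * z.1)).trans_le (sq_mul_le_of_sq_le hc hx))
  have ha : a ^ 2 ≤ aB := by
    simpa using sq_add_le_of_sq_le hacu (sq_mul_le_of_sq_le hc hu)
  have hb : b ^ 2 ≤ 2 * ((X' ^ 2 + M' ^ 2) * (M / m') + aB * X ^ 2) := by
    have haxb : (a * z.1 + b) ^ 2 ≤ (X' ^ 2 + M' ^ 2) * (M / m') := by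
      refine le_trans ?_ (mul_le_mul (add_le_add hu hv) hN (by positivity) (by positivity))
      linarith [moeb_numer_sq hdet hy (x := z.1) (b := b), mul_nonneg (sq_nonneg a) (sq_nonneg z.2)]
    simpa using sq_add_le_of_sq_le haxb ((neg_sq (a * z.1)).trans_le (sq_mul_le_of_sq_le ha hx))
  exact ⟨le_max_of_le_right (le_max_of_le_left ha), le_max_of_le_right (le_max_of_le_right hb),
    le_max_of_le_left (le_max_of_le_left hc), le_max_of_le_left (le_max_of_le_right hd)⟩

end Moebius

section Action

variable {k : ℕ}

def box (X m M : ℝ) : Set Pt :=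
  {p | (x1 p, y1 p) ∈ halfBox X m M ∧ (x2 p, y2 p) ∈ halfBox X m M}

lemma abs_coords_le_norm (p : Pt) :
    |x1 p| ≤ ‖p‖ ∧ |x2 p| ≤ ‖p‖ ∧ |y1 p| ≤ ‖p‖ ∧ |y2 p| ≤ ‖p‖ := by
  simp [Prod.norm_def, x1, x2, y1, y2]

lemma exists_subset_box {C : Set Pt} (hC : C ⊆ HH) (hCc : IsCompact C) :
    ∃ X m M, 0 < m ∧ m ≤ 1 ∧ 0 ≤ M ∧ C ⊆ box X m M := by
  have hy1 : Continuous y1 := by unfold y1; fun_prop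
  have hy2 : Continuous y2 := by unfold y2; fun_prop
  have hcont : ContinuousOn (fun p : Pt => (p, (y1 p)⁻¹, (y2 p)⁻¹)) C :=
    continuousOn_id.prodMk ((hy1.continuousOn.inv₀ fun p hp => (hC hp).1.ne').prodMk
      (hy2.continuousOn.inv₀ fun p hp => (hC hp).2.ne'))
  obtain ⟨K, hK⟩ := hCc.exists_bound_of_continuousOn hcont
  set K' := max K 1
  have hKK' : K ≤ K' := le_max_left K 1
  have hK' : 0 < K' := by positivity
  refine ⟨K', K'⁻¹, K', by positivity, inv_le_one_of_one_le₀ (le_max_right _ _), hK'.le,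
    fun p hp => ?_⟩
  obtain ⟨hp1, hp2⟩ := hC hp
  have hb := (hK p hp).trans hKK'
  have hnorm : ‖p‖ ≤ K' := (norm_fst_le _).trans hb
  have hinv1 : (y1 p)⁻¹ ≤ K' := by
    have := (norm_fst_le _).trans ((norm_snd_le _).trans hb)
    rwa [Real.norm_eq_abs, abs_of_pos (inv_pos.2 hp1)] at this
  have hinv2 : (y2 p)⁻¹ ≤ K' := by
    have := (norm_snd_le _).trans ((norm_snd_le _).trans hb)
    rwa [Real.norm_eq_abs, abs_of_pos (inv_pos.2 hp2)] at this
  obtain ⟨hx1, hx2, hy1, hy2⟩ := abs_coords_le_norm p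
  exact ⟨⟨hx1.trans hnorm, inv_le_of_inv_le₀ hp1 hinv1, (le_abs_self _).trans (hy1.trans hnorm)⟩,
    ⟨hx2.trans hnorm, inv_le_of_inv_le₀ hp2 hinv2, (le_abs_self _).trans (hy2.trans hnorm)⟩⟩

lemma det_coe_eq (g : SL k) : g.1 0 0 * g.1 1 1 - g.1 0 1 * g.1 1 0 = 1 :=
  (Matrix.det_fin_two g.1).symm.trans g.2

lemma det_fst (g : SL k) :
    (g.1 0 0 : ℝ × ℝ).1 * (g.1 1 1 : ℝ × ℝ).1 - (g.1 0 1 : ℝ × ℝ).1 * (g.1 1 0 : ℝ × ℝ).1 = 1 := by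
  simpa using congrArg (fun x : R k => (x : ℝ × ℝ).1) (det_coe_eq g)

lemma det_snd (g : SL k) :
    (g.1 0 0 : ℝ × ℝ).2 * (g.1 1 1 : ℝ × ℝ).2 - (g.1 0 1 : ℝ × ℝ).2 * (g.1 1 0 : ℝ × ℝ).2 = 1 := by
  simpa using congrArg (fun x : R k => (x : ℝ × ℝ).2) (det_coe_eq g)

lemma finite_setOf_act_mem_box (hk : 0 < k) {X m M X' m' M' : ℝ} (hm : 0 < m) (hm' : 0 < m') :
    {g : SL k | ∃ z ∈ box X m M, act k g z ∈ box X' m' M'}.Finite := by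
  obtain ⟨B, hB⟩ := exists_sq_le_of_moeb_mem_halfBox (X := X) (M := M) (X' := X') (M' := M') hm hm'
  refine (finite_setOf_entries_sq_le hk B).subset ?_
  rintro g ⟨z, hz, hgz⟩
  obtain ⟨ha₁, hb₁, hc₁, hd₁⟩ := hB _ _ _ _ (det_fst g) _ hz.1 hgz.1
  obtain ⟨ha₂, hb₂, hc₂, hd₂⟩ := hB _ _ _ _ (det_snd g) _ hz.2 hgz.2
  intro i j
  fin_cases i <;> fin_cases j
  exacts [⟨ha₁, ha₂⟩, ⟨hb₁, hb₂⟩, ⟨hc₁, hc₂⟩, ⟨hd₁, hd₂⟩]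

end Action

section Height

variable {k : ℕ}

lemma bottomRow_mem_Spairs (g : SL k) : (g.1 1 0, g.1 1 1) ∈ Spairs k :=
  (Ideal.eq_top_iff_one _).mpr (Ideal.mem_span_pair.mpr
    ⟨-g.1 0 1, g.1 0 0, by linear_combination det_coe_eq g⟩)

lemma hh_act_mul_HNorm (g : SL k) {z : Pt} (hz : z ∈ HH) :
    hh (act k g z) * HNorm (g.1 1 0 : ℝ × ℝ) (g.1 1 1) z = hh z := by
  have h1 := moeb_snd_mul_denom (det_fst g) hz.1 (x := x1 z)
  have h2 := moeb_snd_mul_denom (det_snd g) hz.2 (x := x2 z)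
  unfold hh HNorm
  conv_rhs => rw [← h1, ← h2]
  simp only [act, y1, y2]
  ring

lemma HNorm_eq_one_of_bottomLeft_eq_zero {g : SL k} (hc : g.1 1 0 = 0) (z : Pt) :
    HNorm (g.1 1 0 : ℝ × ℝ) (g.1 1 1) z = 1 := by
  have hunit : IsUnit (g.1 1 1) :=
    IsUnit.of_mul_eq_one_right (g.1 0 0) (by simpa [hc] using det_coe_eq g)
  have := sq_Nm_eq_one_of_isUnit hunit
  simp only [Nm] at this
  simp only [HNorm, hc, ZeroMemClass.coe_zero, Prod.fst_zero, Prod.snd_zero]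
  linear_combination this

lemma HNorm_mul_sq_hh_act_le_one (hk : Squarefree k) (hk1 : 1 < k) {g : SL k}
    (hc : g.1 1 0 ≠ 0) {z : Pt} (hz : z ∈ HH) :
    HNorm (g.1 1 0 : ℝ × ℝ) (g.1 1 1) z * hh (act k g z) ^ 2 ≤ 1 := by
  have h1 := moeb_denom_mul_sq_mul_sq_le_one (det_fst g) hz.1 (x := x1 z)
  have h2 := moeb_denom_mul_sq_mul_sq_le_one (det_snd g) hz.2 (x := x2 z)
  have hNm : 1 ≤ Nm k (g.1 1 0) ^ 2 := by
    simpa using pow_le_pow_left₀ zero_le_one (one_le_abs_Nm hk hk1 hc) 2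
  have hN : 0 ≤ HNorm (g.1 1 0 : ℝ × ℝ) (g.1 1 1) z * hh (act k g z) ^ 2 :=
    mul_nonneg (by unfold HNorm; positivity) (sq_nonneg _)
  calc _ ≤ HNorm (g.1 1 0 : ℝ × ℝ) (g.1 1 1) z * hh (act k g z) ^ 2 * Nm k (g.1 1 0) ^ 2 :=
        le_mul_of_one_le_right hN hNm
    _ ≤ 1 := by
      refine Eq.trans_le ?_ (mul_le_one₀ h1 (by positivity) h2)
      simp only [HNorm, hh, Nm, act, y1, y2]
      ring

lemma hh_mem_Icc_of_mem_box {X m M : ℝ} (hm : 0 ≤ m) {w : Pt} (hw : w ∈ box X m M) :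
    hh w ∈ Set.Icc (m ^ 2) (M ^ 2) := by
  obtain ⟨⟨-, h1, h1'⟩, ⟨-, h2, h2'⟩⟩ := hw
  exact ⟨by rw [sq]; exact mul_le_mul h1 h2 hm (hm.trans h1),
    by rw [sq]; exact mul_le_mul h1' h2' (hm.trans h2) ((hm.trans h1).trans h1')⟩

lemma hh_mem_Icc_of_mem_F0 (hk : Squarefree k) (hk1 : 1 < k) {g : SL k} {z : Pt}
    (hz : z ∈ F0 k) {X m M : ℝ} (hm : 0 < m) (hm1 : m ≤ 1) (hw : act k g z ∈ box X m M) :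
    hh z ∈ Set.Icc (m ^ 2) ((M / m ^ 2) ^ 2) := by
  obtain ⟨hlo, hhi⟩ := hh_mem_Icc_of_mem_box hm.le hw
  have hN1 : 1 ≤ HNorm (g.1 1 0 : ℝ × ℝ) (g.1 1 1) z := hz.2 _ (bottomRow_mem_Spairs g)
  have hN2 : HNorm (g.1 1 0 : ℝ × ℝ) (g.1 1 1) z ≤ (m ^ 4)⁻¹ := by
    rcases eq_or_ne (g.1 1 0) 0 with hc | hc
    · rw [HNorm_eq_one_of_bottomLeft_eq_zero hc]
      exact one_le_inv₀ (by positivity) |>.mpr (pow_le_one₀ hm.le hm1)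
    · rw [← one_div, le_div_iff₀ (by positivity)]
      calc _ ≤ HNorm (g.1 1 0 : ℝ × ℝ) (g.1 1 1) z * hh (act k g z) ^ 2 := by
            rw [show m ^ 4 = (m ^ 2) ^ 2 by ring]
            gcongr
        _ ≤ 1 := HNorm_mul_sq_hh_act_le_one hk hk1 hc hz.1
  rw [← hh_act_mul_HNorm g hz.1]
  constructor
  · exact hlo.trans (le_mul_of_one_le_right ((sq_nonneg m).trans hlo) hN1)
  · rw [div_pow, ← pow_mul, div_eq_mul_inv]
    exact mul_le_mul hhi hN2 (by linarith) (sq_nonneg M)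

end Height

section Cusp

variable {k : ℕ}

lemma x_eq_s1_add_s2_mul (hk : 0 < k) (p : Pt) :
    x1 p = s1 k p + s2 k p * omg k ∧ x2 p = s1 k p + s2 k p * omg' k := by
  have h := (omg_sub_omg'_pos hk).ne'
  have h' : omg' k - omg k ≠ 0 := by rw [← neg_sub]; exact neg_ne_zero.mpr h
  unfold s1 s2
  constructor <;> field_simp <;> ring

lemma mem_box_of_mem_FInf (hk : 0 < k) {ε m M : ℝ} (hε : 0 < ε) (hm : 0 ≤ m) (hM : 0 ≤ M)
    {z : Pt} (hz : z ∈ FInf k ε) (hh_mem : hh z ∈ Set.Icc (m ^ 2) (M ^ 2)) :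
    z ∈ box ((1 + |omg k| + |omg' k|) / 2) (m / ε) (ε * M) := by
  obtain ⟨⟨hy1, hy2⟩, hs1, hs2, hr1, hr2⟩ := hz
  obtain ⟨hlo, hhi⟩ := hh_mem
  obtain ⟨hx1, hx2⟩ := x_eq_s1_add_s2_mul hk z
  have hx : ∀ w : ℝ, |w| ≤ |omg k| + |omg' k| →
      |s1 k z + s2 k z * w| ≤ (1 + |omg k| + |omg' k|) / 2 := fun w hw =>
    calc |s1 k z + s2 k z * w| ≤ |s1 k z| + |s2 k z| * |w| := by
          rw [← abs_mul]; exact abs_add_le _ _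
      _ ≤ 1 / 2 + 1 / 2 * (|omg k| + |omg' k|) := by gcongr
      _ = _ := by ring
  have hr : 0 < rr z := div_pos hy1 hy2
  have hsq1 : y1 z ^ 2 = rr z * hh z := by unfold rr hh; field_simp
  have hsq2 : y2 z ^ 2 = hh z / rr z := by unfold rr hh; field_simp
  have hlow : (m / ε) ^ 2 = (ε ^ 2)⁻¹ * m ^ 2 := by ring
  have hhigh : (ε * M) ^ 2 = M ^ 2 / (ε ^ 2)⁻¹ := by field_simp
  have hm' : 0 ≤ m / ε := by positivity
  have hM' : 0 ≤ ε * M := by positivity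
  refine ⟨⟨hx1 ▸ hx _ (le_add_of_nonneg_right (abs_nonneg _)), ?_, ?_⟩,
    ⟨hx2 ▸ hx _ (le_add_of_nonneg_left (abs_nonneg _)), ?_, ?_⟩⟩
  · rw [← pow_le_pow_iff_left₀ hm' hy1.le two_ne_zero, hsq1, hlow]
    exact mul_le_mul hr1 hlo (sq_nonneg m) hr.le
  · rw [← pow_le_pow_iff_left₀ hy1.le hM' two_ne_zero, hsq1, mul_pow]
    exact mul_le_mul hr2 hhi ((sq_nonneg m).trans hlo) (sq_nonneg ε)
  · rw [← pow_le_pow_iff_left₀ hm' hy2.le two_ne_zero, hsq2, div_pow]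
    exact div_le_div₀ ((sq_nonneg m).trans hlo) hlo (by positivity) hr2
  · rw [← pow_le_pow_iff_left₀ hy2.le hM' two_ne_zero, hsq2, hhigh]
    exact div_le_div₀ (sq_nonneg M) hhi (by positivity) hr1

end Cusp

/-- The fundamental domains `F` and `F_∞` are locally finite: for every
compact subset `C` of `H²×H²` the set `{γ ∈ Γ : C ∩ γ(F) ≠ ∅}` is finite, and the set
`{γ ∈ Γ_∞ : C ∩ γ(F_∞) ≠ ∅}` is finite. -/
theorem F_locallyFinite (k : ℕ) (hk : Squarefree k) (hk1 : 1 < k)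
    (e : (R k)ˣ) (he : IsFundUnit k e)
    (C : Set Pt) (hC : C ⊆ HH) (hCc : IsCompact C) :
    {g : SL k | (C ∩ act k g '' F k (eps k e)).Nonempty}.Finite ∧
    {g : SL k | g.1 1 0 = 0 ∧ (C ∩ act k g '' FInf k (eps k e)).Nonempty}.Finite := by
  obtain ⟨X, m, M, hm, hm1, hM, hCbox⟩ := exists_subset_box hC hCc
  have hk0 : 0 < k := by omega
  have hε : 0 < eps k e := one_pos.trans he.1
  constructor
  · refine (finite_setOf_act_mem_box hk0 (X := (1 + |omg k| + |omg' k|) / 2) (m := m / eps k e)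
      (M := eps k e * (M / m ^ 2)) (X' := X) (M' := M) (by positivity) hm).subset ?_
    rintro g ⟨_, hwC, z, ⟨hz, hz0⟩, rfl⟩
    exact ⟨z, mem_box_of_mem_FInf hk0 hε hm.le (by positivity) hz
      (hh_mem_Icc_of_mem_F0 hk hk1 hz0 hm hm1 (hCbox hwC)), hCbox hwC⟩
  · refine (finite_setOf_act_mem_box hk0 (X := (1 + |omg k| + |omg' k|) / 2) (m := m / eps k e)
      (M := eps k e * M) (X' := X) (M' := M) (by positivity) hm).subset ?_
    rintro g ⟨hc, _, hwC, z, hz, rfl⟩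
    have hhz : hh (act k g z) = hh z := by
      simpa [HNorm_eq_one_of_bottomLeft_eq_zero hc] using hh_act_mul_HNorm g hz.1
    exact ⟨z, mem_box_of_mem_FInf hk0 hε hm.le hM hz
      (hhz ▸ hh_mem_Icc_of_mem_box hm.le (hCbox hwC)), hCbox hwC⟩

end Hilbert
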